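/- Fix k ≥ 1. The minimum value of n for which the path graph P_n admits a burning sequence with exactly k sources whose burning is a burning homomorphism equals 3k − 2: the path graph P_{3k−2} admits such a burning sequence, and no path graph P_n with n < 3k − 2 does. -/

import Mathlib

open SimpleGraph

/-- The path graph `P_n` with vertices `1, …, n` (represented by `Fin n`,
vertex `i+1` corresponds to index `i`) and edges `{i, i+1}`. -/
def pathG (n : ℕ) : SimpleGraph (Fin n) where
  Adj v w := v.val + 1 = w.val ∨ w.val + 1 = v.val
  symm := ⟨by intro v w h; tauto⟩
  loopless := ⟨by intro v h; rcases h with h | h <;> omega⟩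

/-- `(s 0, …, s (k-1))` is a burning sequence of `G` (written `1`-based in the paper:
`d(v_i, v_j) ≥ j - i + 1` for `i < j`, and every vertex `v` satisfies
`d(v_i, v) ≤ k + 1 - i` for some `i`). Distances are `ℕ∞`-valued. -/
def IsBurningSeq {V : Type*} (G : SimpleGraph V) {k : ℕ} (s : Fin k → V) : Prop :=
  1 ≤ k ∧
  (∀ i j : Fin k, i < j → ((j.val - i.val + 1 : ℕ) : ℕ∞) ≤ G.edist (s i) (s j)) ∧
  (∀ v : V, ∃ i : Fin k, G.edist (s i) v ≤ ((k - i.val : ℕ) : ℕ∞))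

/-- The burning time function `λ(v) = min_{1 ≤ i ≤ k} (i + d(v_i, v))`. -/
noncomputable def burnTime {V : Type*} (G : SimpleGraph V) {k : ℕ} (s : Fin k → V)
    (v : V) : ℕ :=
  (⨅ i : Fin k, ((i.val + 1 : ℕ) : ℕ∞) + G.edist (s i) v).toNat

/-- The end time `T = max_{v ∈ V} λ(v)` of a burning. -/
noncomputable def endTime {V : Type*} [Fintype V] (G : SimpleGraph V) {k : ℕ}
    (s : Fin k → V) : ℕ :=
  Finset.univ.sup fun v => burnTime G s v

/-!
Along an edge the burning time `λ` changes by at most one, being a minimum of 1-Lipschitz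
functions; in a burning homomorphism it therefore changes by exactly one, so on a path
`λ(v) + v` has constant parity. The source `v_i` burns at time `i`, so for `i < j` the
separation `d(v_i, v_j) ≥ j - i + 1` together with `d(v_i, v_j) ≡ j - i (mod 2)` forces
`d(v_i, v_j) ≥ 3`, and `k` vertices of `P_n` pairwise at distance `≥ 3` need `n ≥ 3k - 2`.
Conversely, with the sources at `3k - 2, 3k - 5, …, 1` every term `i + d(v_i, v)` of the minimum
defining `λ(v)` is `≡ k + 1 + v (mod 2)`, so `λ` alternates in parity along the path.
-/

def IsBurningHom {V : Type*} (G : SimpleGraph V) {k : ℕ} (s : Fin k → V) : Prop :=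
  ∀ v w : V, G.Adj v w → burnTime G s v ≠ burnTime G s w

namespace IsBurningSeq

variable {V : Type*} {G : SimpleGraph V} {k : ℕ} {s : Fin k → V}

lemma iInf_ne_top (hs : IsBurningSeq G s) (v : V) :
    (⨅ i : Fin k, ((i.val + 1 : ℕ) : ℕ∞) + G.edist (s i) v) ≠ ⊤ := by
  obtain ⟨i, hi⟩ := hs.2.2 v
  refine ne_top_of_le_ne_top ?_ (iInf_le _ i)
  exact WithTop.add_ne_top.2
    ⟨ENat.natCast_ne_top _, ne_top_of_le_ne_top (ENat.natCast_ne_top _) hi⟩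

lemma coe_burnTime (hs : IsBurningSeq G s) (v : V) :
    (burnTime G s v : ℕ∞) = ⨅ i : Fin k, ((i.val + 1 : ℕ) : ℕ∞) + G.edist (s i) v :=
  ENat.natCast_toNat (hs.iInf_ne_top v)

lemma burnTime_le (hs : IsBurningSeq G s) (i : Fin k) (v : V) :
    (burnTime G s v : ℕ∞) ≤ ((i.val + 1 : ℕ) : ℕ∞) + G.edist (s i) v :=
  hs.coe_burnTime v ▸ iInf_le _ i

lemma exists_burnTime_eq (hs : IsBurningSeq G s) (v : V) :
    ∃ i : Fin k, (burnTime G s v : ℕ∞) = ((i.val + 1 : ℕ) : ℕ∞) + G.edist (s i) v := by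
  have : Nonempty (Fin k) := ⟨⟨0, hs.1⟩⟩
  obtain ⟨i, hi⟩ :=
    ENat.exists_eq_iInf fun i : Fin k => ((i.val + 1 : ℕ) : ℕ∞) + G.edist (s i) v
  exact ⟨i, by rw [hs.coe_burnTime, hi]⟩

lemma burnTime_le_add_edist (hs : IsBurningSeq G s) (v w : V) :
    (burnTime G s v : ℕ∞) ≤ burnTime G s w + G.edist w v := by
  obtain ⟨i, hi⟩ := hs.exists_burnTime_eq w
  calc (burnTime G s v : ℕ∞)
      ≤ ((i.val + 1 : ℕ) : ℕ∞) + G.edist (s i) v := hs.burnTime_le i v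
    _ ≤ ((i.val + 1 : ℕ) : ℕ∞) + (G.edist (s i) w + G.edist w v) := by
          gcongr; exact SimpleGraph.edist_triangle
    _ = burnTime G s w + G.edist w v := by rw [hi, add_assoc]

lemma burnTime_le_succ_of_adj (hs : IsBurningSeq G s) {v w : V} (h : G.Adj v w) :
    burnTime G s v ≤ burnTime G s w + 1 := by
  have := hs.burnTime_le_add_edist v w
  rw [edist_eq_one_iff_adj.2 h.symm] at this
  exact_mod_cast this

lemma burnTime_eq_succ_or_of_adj (hs : IsBurningSeq G s) (hhom : IsBurningHom G s) {v w : V}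
    (h : G.Adj v w) :
    burnTime G s v = burnTime G s w + 1 ∨ burnTime G s w = burnTime G s v + 1 := by
  have := hs.burnTime_le_succ_of_adj h
  have := hs.burnTime_le_succ_of_adj h.symm
  have := hhom v w h
  omega

lemma burnTime_source (hs : IsBurningSeq G s) (i : Fin k) : burnTime G s (s i) = i.val + 1 := by
  apply le_antisymm
  · have := hs.burnTime_le i (s i)
    rw [edist_self, add_zero] at this
    exact_mod_cast this
  · obtain ⟨j, hj⟩ := hs.exists_burnTime_eq (s i)
    suffices ((i.val + 1 : ℕ) : ℕ∞) ≤ burnTime G s (s i) by exact_mod_cast this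
    rw [hj]
    rcases lt_or_ge j i with hji | hij
    · calc ((i.val + 1 : ℕ) : ℕ∞)
          ≤ ((j.val + 1 : ℕ) : ℕ∞) + ((i.val - j.val + 1 : ℕ) : ℕ∞) := by
            norm_cast; omega
        _ ≤ ((j.val + 1 : ℕ) : ℕ∞) + G.edist (s j) (s i) := by gcongr; exact hs.2.1 j i hji
    · exact le_add_right (by exact_mod_cast Nat.succ_le_succ (Fin.le_def.1 hij))

end IsBurningSeq

section PathGraph

lemma dist_le_length_of_walk_pathG {n : ℕ} {v w : Fin n} (p : (pathG n).Walk v w) :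
    Nat.dist v w ≤ p.length := by
  induction p with
  | nil => simp
  | cons h _ ih =>
    rw [Walk.length_cons]
    rcases h with h | h <;> unfold Nat.dist at * <;> omega

lemma pathG_edist_le {n i j : ℕ} (hij : i ≤ j) (hj : j < n) :
    (pathG n).edist ⟨i, hij.trans_lt hj⟩ ⟨j, hj⟩ ≤ ((j - i : ℕ) : ℕ∞) := by
  induction j, hij using Nat.le_induction with
  | base => simp
  | succ j hij ih =>
    calc (pathG n).edist ⟨i, by omega⟩ ⟨j + 1, hj⟩
        ≤ (pathG n).edist ⟨i, by omega⟩ ⟨j, by omega⟩ +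
            (pathG n).edist ⟨j, by omega⟩ ⟨j + 1, hj⟩ := SimpleGraph.edist_triangle
      _ ≤ ((j - i : ℕ) : ℕ∞) + 1 :=
          add_le_add (ih (by omega)) (edist_eq_one_iff_adj.2 (Or.inl rfl)).le
      _ = ((j + 1 - i : ℕ) : ℕ∞) := by norm_cast; omega

lemma pathG_edist {n : ℕ} (v w : Fin n) : (pathG n).edist v w = Nat.dist v w := by
  refine le_antisymm ?_ ?_
  · wlog hvw : v ≤ w generalizing v w
    · rw [SimpleGraph.edist_comm, Nat.dist_comm]
      exact this w v (le_of_not_ge hvw)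
    rw [Nat.dist_eq_sub_of_le hvw]
    exact pathG_edist_le hvw w.isLt
  · rcases eq_or_ne ((pathG n).edist v w) ⊤ with h | h
    · exact h ▸ le_top
    · obtain ⟨p, hp⟩ := exists_walk_of_edist_ne_top h
      rw [← hp]
      exact_mod_cast dist_le_length_of_walk_pathG p

namespace IsBurningSeq

variable {n k : ℕ} {s : Fin k → Fin n}

lemma exists_burnTime_eq_pathG (hs : IsBurningSeq (pathG n) s) (v : Fin n) :
    ∃ i : Fin k, burnTime (pathG n) s v = i.val + 1 + Nat.dist (s i) v := by
  obtain ⟨i, hi⟩ := hs.exists_burnTime_eq v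
  rw [pathG_edist] at hi
  exact ⟨i, by exact_mod_cast hi⟩

lemma burnTime_add_val_mod_two_pathG (hs : IsBurningSeq (pathG n) s)
    (hhom : IsBurningHom (pathG n) s) (v w : Fin n) :
    (burnTime (pathG n) s v + v) % 2 = (burnTime (pathG n) s w + w) % 2 := by
  suffices h : ∀ (m : ℕ) (hm : m < n), (burnTime (pathG n) s ⟨m, hm⟩ + m) % 2 =
      burnTime (pathG n) s ⟨0, by omega⟩ % 2 by
    rw [h v v.isLt, h w w.isLt]
  intro m
  induction m with
  | zero => simp
  | succ m ih =>
    intro hm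
    have := hs.burnTime_eq_succ_or_of_adj hhom
      (v := ⟨m, by omega⟩) (w := ⟨m + 1, hm⟩) (Or.inl rfl)
    have := ih (by omega)
    omega

lemma three_le_dist_pathG (hs : IsBurningSeq (pathG n) s) (hhom : IsBurningHom (pathG n) s)
    {i j : Fin k} (hij : i ≠ j) : 3 ≤ Nat.dist (s i) (s j) := by
  wlog hlt : i < j generalizing i j
  · rw [Nat.dist_comm]
    exact this hij.symm (lt_of_le_of_ne (le_of_not_gt hlt) hij.symm)
  have hsep := hs.2.1 i j hlt
  rw [pathG_edist] at hsep
  have hsep : j.val - i.val + 1 ≤ Nat.dist (s i) (s j) := by exact_mod_cast hsep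
  have hpar := hs.burnTime_add_val_mod_two_pathG hhom (s i) (s j)
  rw [hs.burnTime_source, hs.burnTime_source] at hpar
  have : i.val < j.val := hlt
  unfold Nat.dist at *
  omega

end IsBurningSeq

lemma mul_le_of_pairwise_le_dist {k n d : ℕ} (f : Fin k → Fin n)
    (hf : Pairwise fun i j => d ≤ Nat.dist (f i) (f j)) : d * k ≤ n + d - 1 := by
  let g : Fin k × Fin d → Fin (n + d - 1) := fun p =>
    ⟨(f p.1).val + p.2.val, by have := (f p.1).isLt; have := p.2.isLt; omega⟩
  have hg : Function.Injective g := by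
    rintro ⟨i, t⟩ ⟨j, u⟩ h
    have h : (f i).val + t.val = (f j).val + u.val := Fin.mk.inj_iff.1 h
    have hij : i = j := by
      by_contra hne
      have := hf hne
      have := t.isLt
      have := u.isLt
      unfold Nat.dist at *
      omega
    subst hij
    exact Prod.ext rfl (Fin.ext (Nat.add_left_cancel h))
  simpa [mul_comm] using Fintype.card_le_of_injective g hg

def spacedSources (k : ℕ) : Fin k → Fin (3 * k - 2) :=
  fun i => ⟨3 * (k - 1 - i.val), by omega⟩

lemma spacedSources_val (k : ℕ) (i : Fin k) :
    (spacedSources k i : ℕ) = 3 * (k - 1 - i.val) := rfl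

lemma isBurningSeq_spacedSources {k : ℕ} (hk : 1 ≤ k) :
    IsBurningSeq (pathG (3 * k - 2)) (spacedSources k) := by
  refine ⟨hk, fun i j hij => ?_, fun v => ?_⟩
  · have : i.val < j.val := hij
    rw [pathG_edist]
    exact_mod_cast (by simp only [Nat.dist, spacedSources_val]; omega)
  · -- `v` is reached in time by the source of index `⌊(2k - 2 - v) / 2⌋`
    refine ⟨⟨(2 * k - 2 - v.val) / 2, by omega⟩, ?_⟩
    rw [pathG_edist]
    exact_mod_cast (by have := v.isLt; simp only [Nat.dist, spacedSources_val]; omega)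

lemma burnTime_spacedSources_mod_two {k : ℕ} (hk : 1 ≤ k) (v : Fin (3 * k - 2)) :
    burnTime (pathG (3 * k - 2)) (spacedSources k) v % 2 = (k + v.val) % 2 := by
  obtain ⟨i, hi⟩ := (isBurningSeq_spacedSources hk).exists_burnTime_eq_pathG v
  have := i.isLt
  rw [hi]
  simp only [Nat.dist, spacedSources_val]
  omega

lemma isBurningHom_spacedSources {k : ℕ} (hk : 1 ≤ k) :
    IsBurningHom (pathG (3 * k - 2)) (spacedSources k) := by
  intro v w hvw heq
  have hv := burnTime_spacedSources_mod_two hk v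
  have hw := burnTime_spacedSources_mod_two hk w
  rcases hvw with h | h <;> omega

end PathGraph

/-- Fix `k ≥ 1`. The minimum `n` for which `P_n` admits a burning
sequence with exactly `k` sources whose burning is a burning homomorphism equals
`3k - 2`: `P_{3k-2}` admits such a burning sequence, and no `P_n` with `n < 3k - 2`
does. -/
theorem stmt_13 (k : ℕ) (hk : 1 ≤ k) :
    (∃ s : Fin k → Fin (3 * k - 2), IsBurningSeq (pathG (3 * k - 2)) s ∧
      (∀ v w : Fin (3 * k - 2), (pathG (3 * k - 2)).Adj v w →
        burnTime (pathG (3 * k - 2)) s v ≠ burnTime (pathG (3 * k - 2)) s w)) ∧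
    (∀ n : ℕ, n < 3 * k - 2 →
      ¬ ∃ s : Fin k → Fin n, IsBurningSeq (pathG n) s ∧
        (∀ v w : Fin n, (pathG n).Adj v w →
          burnTime (pathG n) s v ≠ burnTime (pathG n) s w)) := by
  constructor
  · exact ⟨spacedSources k, isBurningSeq_spacedSources hk, isBurningHom_spacedSources hk⟩
  · rintro n hn ⟨s, hs, hhom⟩
    have := mul_le_of_pairwise_le_dist s fun i j hij => hs.three_le_dist_pathG hhom hij
    omega
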